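/- For every (x₀,x₁) ∈ {0,1}² there exist eight unitary 4×4 complex matrices U₁, …, U₈ such that for every 4×4 complex matrix ρ: F_{(x₀,x₁)}(ρ) = (1/8)·Σ_{j=1}^{8} U_j ρ U_jᴴ. That is, each strong oblivious transfer channel is a uniform mixture of unitary conjugations. -/

import Mathlib

open Matrix Kronecker ComplexOrder

/-- The square root of a positive semidefinite matrix, as `Matrix.PosSemidef.sqrt` was defined
in the older Mathlib (removed since). -/
noncomputable def Matrix.PosSemidef.sqrt {n 𝕜 : Type*} [Fintype n] [DecidableEq n] [RCLike 𝕜]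
    {A : Matrix n n 𝕜} (hA : A.PosSemidef) : Matrix n n 𝕜 :=
  (hA.1.eigenvectorUnitary : Matrix n n 𝕜) *
    diagonal ((RCLike.ofReal : ℝ → 𝕜) ∘ Real.sqrt ∘ hA.1.eigenvalues) *
    (star hA.1.eigenvectorUnitary : Matrix n n 𝕜)
/-- The trace norm `‖A‖₁ = Tr √(Aᴴ A)` of a complex matrix. -/
noncomputable def traceNorm {n : Type*} [Fintype n] [DecidableEq n] (A : Matrix n n ℂ) : ℝ :=
  ((Matrix.posSemidef_conjTranspose_mul_self A).sqrt.trace).re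

/-- The trace distance `Δ(ρ,σ) = ‖ρ - σ‖₁ / 2`. -/
noncomputable def traceDist {n : Type*} [Fintype n] [DecidableEq n] (ρ σ : Matrix n n ℂ) : ℝ :=
  traceNorm (ρ - σ) / 2

open scoped Classical in
/-- Positive semidefinite square root (junk value `0` on non-PSD matrices). -/
noncomputable def psdSqrt {n : Type*} [Fintype n] [DecidableEq n] (A : Matrix n n ℂ) :
    Matrix n n ℂ :=
  if h : A.PosSemidef then h.sqrt else 0

/-- The fidelity `F(ρ,σ) = ‖√ρ √σ‖₁`. -/
noncomputable def fidelity {n : Type*} [Fintype n] [DecidableEq n] (ρ σ : Matrix n n ℂ) : ℝ :=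
  traceNorm (psdSqrt ρ * psdSqrt σ)

/-- A density matrix: positive semidefinite with trace 1. -/
def IsDensityMatrix {n : Type*} [Fintype n] [DecidableEq n] (ρ : Matrix n n ℂ) : Prop :=
  ρ.PosSemidef ∧ ρ.trace = 1

/-- The projector `|b⟩⟨b|` on ℂ². -/
noncomputable def proj (b : Bool) : Matrix Bool Bool ℂ := Matrix.single b b 1

/-- The strong oblivious transfer channel `F_{(x₀,x₁)}`. -/
noncomputable def sotChannel (x₀ x₁ : Bool) (ρ : Matrix (Bool × Bool) (Bool × Bool) ℂ) :
    Matrix (Bool × Bool) (Bool × Bool) ℂ :=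
  ∑ i : Bool, ∑ i' : Bool,
    ρ (i, i') (i, i') •
      (((1/2 : ℂ) • (1 : Matrix Bool Bool ℂ)) ⊗ₖ proj (xor (bif xor i i' then x₁ else x₀) i'))

/-!
Each witness is a signed permutation matrix `P_k D_s`. Averaging `D_s ρ D_sᴴ` over the four
Pauli-`Z` phases `D_s = Z^{s.1} ⊗ Z^{s.2}` deletes the off-diagonal entries of `ρ`, leaving
`∑_q ρ_qq |q⟩⟨q|`. The permutation `P_k` sends `|i, i'⟩` to `|k ⊕ i ⊕ i', x_{i⊕i'} ⊕ i'⟩`,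
a bijection because `i ⊕ i'` and `x_{i⊕i'} ⊕ i'` determine `i'` and then `i`; averaging over
the bit `k` turns the first register into `I₂ / 2` while the second carries the output bit
`x_{i⊕i'} ⊕ i'`.
-/

open Equiv

namespace Matrix

variable {n R : Type*} [Fintype n] [DecidableEq n]

theorem sum_diagonal_mul_mul_conjTranspose [CommSemiring R] [StarRing R] {G : Type*} [Fintype G]
    (χ : G → n → R) (c : R)
    (hχ : ∀ p q, ∑ g, χ g p * star (χ g q) = if p = q then c else 0) (A : Matrix n n R) :
    ∑ g, diagonal (χ g) * A * (diagonal (χ g))ᴴ = c • diagonal A.diag := by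
  ext p q
  simp only [sum_apply, diagonal_conjTranspose, mul_diagonal, diagonal_mul, Pi.star_apply,
    smul_apply, diagonal_apply, diag_apply, smul_eq_mul]
  calc ∑ g, χ g p * A p q * star (χ g q) = A p q * ∑ g, χ g p * star (χ g q) := by
        rw [Finset.mul_sum]; exact Finset.sum_congr rfl fun g _ => by ring
    _ = _ := by rw [hχ]; split_ifs with h <;> simp [h, mul_comm]

theorem diagonal_mem_unitaryGroup [CommRing R] [StarRing R] {d : n → R}
    (hd : ∀ i, star (d i) * d i = 1) : diagonal d ∈ unitaryGroup n R := by
  rw [mem_unitaryGroup_iff', star_eq_conjTranspose, diagonal_conjTranspose, diagonal_mul_diagonal]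
  exact diagonal_eq_one.mpr (funext hd)

theorem permMatrix_mem_unitaryGroup [CommRing R] [StarRing R] (σ : Perm n) :
    σ.permMatrix R ∈ unitaryGroup n R := by
  rw [mem_unitaryGroup_iff', star_eq_conjTranspose, conjTranspose_permMatrix, ← permMatrix_mul,
    mul_inv_cancel, permMatrix_one]

theorem permMatrix_inv_mul_single_mul_conjTranspose [CommSemiring R] [StarRing R] (σ : Perm n)
    (i j : n) (r : R) :
    σ⁻¹.permMatrix R * single i j r * (σ⁻¹.permMatrix R)ᴴ = single (σ i) (σ j) r := by
  rw [conjTranspose_permMatrix, inv_inv, PEquiv.toMatrix_toPEquiv_mul,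
    PEquiv.mul_toMatrix_toPEquiv]
  simp

theorem one_kronecker_single {m : Type*} [DecidableEq m] [CommSemiring R] (i j : m) (r : R) :
    (1 : Matrix n n R) ⊗ₖ single i j r = ∑ a, single (a, i) (a, j) r := by
  ext ⟨a, b⟩ ⟨c, d⟩
  simp only [kroneckerMap_apply, one_apply, single_apply, sum_apply, Prod.mk.injEq]
  rw [Finset.sum_eq_single a (fun x _ hx => by simp [hx]) (by simp)]
  by_cases hac : a = c <;> by_cases hij : i = b ∧ j = d <;> simp_all

end Matrix

def bitSign (a b : Bool) : ℂ := if a && b then -1 else 1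

theorem star_bitSign (a b : Bool) : star (bitSign a b) = bitSign a b := by
  unfold bitSign; split <;> simp

theorem sum_bitSign_mul_bitSign (p q : Bool) :
    ∑ a, bitSign a p * bitSign a q = if p = q then 2 else 0 := by
  cases p <;> cases q <;> norm_num [bitSign]

def zSign (s q : Bool × Bool) : ℂ := bitSign s.1 q.1 * bitSign s.2 q.2

theorem sum_zSign_mul_star (p q : Bool × Bool) :
    ∑ s, zSign s p * star (zSign s q) = if p = q then 4 else 0 := by
  calc ∑ s, zSign s p * star (zSign s q)
      = (∑ a, bitSign a p.1 * bitSign a q.1) * ∑ b, bitSign b p.2 * bitSign b q.2 := by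
        simp only [Finset.sum_mul_sum, Fintype.sum_prod_type, zSign, star_mul', star_bitSign]
        exact Finset.sum_congr rfl fun _ _ => Finset.sum_congr rfl fun _ _ => by ring
    _ = if p = q then 4 else 0 := by
        simp only [sum_bitSign_mul_bitSign, Prod.ext_iff]
        split_ifs <;> simp_all
        norm_num

theorem star_zSign_mul_self (s q : Bool × Bool) : star (zSign s q) * zSign s q = 1 := by
  unfold zSign bitSign; split_ifs <;> simp

def sotOutput (x₀ x₁ : Bool) (q : Bool × Bool) : Bool :=
  xor (bif xor q.1 q.2 then x₁ else x₀) q.2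

def sotPerm (x₀ x₁ k : Bool) : Perm (Bool × Bool) where
  toFun q := (xor k (xor q.1 q.2), sotOutput x₀ x₁ q)
  invFun r :=
    (xor (xor k r.1) (xor r.2 (bif xor k r.1 then x₁ else x₀)),
      xor r.2 (bif xor k r.1 then x₁ else x₀))
  left_inv := by cases x₀ <;> cases x₁ <;> cases k <;> decide
  right_inv := by cases x₀ <;> cases x₁ <;> cases k <;> decide

theorem sum_single_sotPerm (x₀ x₁ : Bool) (q : Bool × Bool) (r : ℂ) :
    ∑ k, single (sotPerm x₀ x₁ k q) (sotPerm x₀ x₁ k q) r =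
      1 ⊗ₖ single (sotOutput x₀ x₁ q) (sotOutput x₀ x₁ q) r := by
  rw [one_kronecker_single]
  simp only [sotPerm, coe_fn_mk]
  generalize xor q.1 q.2 = c
  cases c <;> simp [add_comm]

def sotUnitary (x₀ x₁ : Bool) (s : Bool × Bool) (k : Bool) :
    Matrix (Bool × Bool) (Bool × Bool) ℂ :=
  (sotPerm x₀ x₁ k)⁻¹.permMatrix ℂ * diagonal (zSign s)

theorem sotUnitary_mem_unitaryGroup (x₀ x₁ : Bool) (s : Bool × Bool) (k : Bool) :
    sotUnitary x₀ x₁ s k ∈ unitaryGroup (Bool × Bool) ℂ :=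
  mul_mem (permMatrix_mem_unitaryGroup _) (diagonal_mem_unitaryGroup (star_zSign_mul_self s))

theorem sotChannel_eq_sum_single (x₀ x₁ : Bool) (ρ : Matrix (Bool × Bool) (Bool × Bool) ℂ) :
    sotChannel x₀ x₁ ρ =
      (1 / 2 : ℂ) • ∑ q, 1 ⊗ₖ single (sotOutput x₀ x₁ q) (sotOutput x₀ x₁ q) (ρ q q) := by
  rw [sotChannel, Fintype.sum_prod_type, Finset.smul_sum]
  refine Finset.sum_congr rfl fun i _ => ?_
  rw [Finset.smul_sum]
  refine Finset.sum_congr rfl fun i' _ => ?_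
  rw [proj, smul_kronecker, smul_comm, ← kronecker_smul, smul_single, smul_eq_mul, mul_one]
  rfl

theorem sum_sotUnitary_conj (x₀ x₁ : Bool) (ρ : Matrix (Bool × Bool) (Bool × Bool) ℂ) :
    ∑ k, ∑ s, sotUnitary x₀ x₁ s k * ρ * (sotUnitary x₀ x₁ s k)ᴴ =
      (4 : ℂ) • ∑ q, 1 ⊗ₖ single (sotOutput x₀ x₁ q) (sotOutput x₀ x₁ q) (ρ q q) := by
  set P : Bool → Matrix (Bool × Bool) (Bool × Bool) ℂ := fun k => (sotPerm x₀ x₁ k)⁻¹.permMatrix ℂ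
  calc ∑ k, ∑ s, sotUnitary x₀ x₁ s k * ρ * (sotUnitary x₀ x₁ s k)ᴴ
      = ∑ k, P k * (∑ s, diagonal (zSign s) * ρ * (diagonal (zSign s))ᴴ) * (P k)ᴴ := by
        simp only [sotUnitary, conjTranspose_mul, Finset.mul_sum, Finset.sum_mul,
          Matrix.mul_assoc, P]
    _ = ∑ k, ∑ q, P k * single q q (4 * ρ q q) * (P k)ᴴ := by
        simp_rw [sum_diagonal_mul_mul_conjTranspose _ _ sum_zSign_mul_star,
          ← sum_single_eq_diagonal, Finset.smul_sum, smul_single, Finset.mul_sum, Finset.sum_mul,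
          diag_apply, smul_eq_mul]
    _ = ∑ q, ∑ k, single (sotPerm x₀ x₁ k q) (sotPerm x₀ x₁ k q) (4 * ρ q q) := by
        rw [Finset.sum_comm]
        simp only [P, permMatrix_inv_mul_single_mul_conjTranspose]
    _ = _ := by
        simp only [sum_single_sotPerm, Finset.smul_sum, ← kronecker_smul, smul_single, smul_eq_mul]

/-- Each strong oblivious transfer channel is a uniform mixture of eight unitary
conjugations. -/
theorem stmt_16 (x₀ x₁ : Bool) :
    ∃ U : Fin 8 → Matrix (Bool × Bool) (Bool × Bool) ℂ,
      (∀ j, (U j)ᴴ * U j = 1) ∧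
      ∀ ρ : Matrix (Bool × Bool) (Bool × Bool) ℂ,
        sotChannel x₀ x₁ ρ = (1/8 : ℂ) • ∑ j, U j * ρ * (U j)ᴴ := by
  let e : Fin 8 ≃ Bool × (Bool × Bool) :=
    (Fintype.equivFinOfCardEq (α := Bool × (Bool × Bool)) rfl).symm
  refine ⟨fun j => sotUnitary x₀ x₁ (e j).2 (e j).1,
    fun j => mem_unitaryGroup_iff'.mp (sotUnitary_mem_unitaryGroup _ _ _ _), fun ρ => ?_⟩
  rw [e.sum_comp fun x => sotUnitary x₀ x₁ x.2 x.1 * ρ * (sotUnitary x₀ x₁ x.2 x.1)ᴴ,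
    Fintype.sum_prod_type, sum_sotUnitary_conj, sotChannel_eq_sum_single, smul_smul]
  norm_num
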